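/- Let d, m be positive integers, H a d×m real matrix, R a symmetric positive definite d×d real matrix, Σ₀ a symmetric positive definite m×m real matrix, μ₀ ∈ ℝ^m, ŷ = Hμ₀, and fix y ∈ ℝ^d. Let W : ℝ^d → ℝ be a weighting function and suppose (i) there exists C₂ < ∞ with W(y')² ≤ C₂ for all y' ∈ ℝ^d, and (ii) there exists C₇ < ∞ with W(y')² ‖y'‖₂ ≤ C₇ for all y' ∈ ℝ^d. For each y' ∈ ℝ^d define Σ(y') = (Σ₀⁻¹ + W(y')² Hᵀ R⁻¹ H)⁻¹ (the matrix being inverted is positive definite, hence invertible) and μ(y') = μ₀ + W(y')² Σ(y') Hᵀ R⁻¹ (y' − ŷ), and define the posterior influence function PIF(y^c) = (1/2)[ Tr(Σ(y^c)⁻¹ Σ(y)) − m + (μ(y) − μ(y^c))ᵀ Σ(y^c)⁻¹ (μ(y) − μ(y^c)) + log(det Σ(y^c) / det Σ(y)) ]. Then there exists a constant C < ∞ such that PIF(y^c) ≤ C for all y^c ∈ ℝ^d; that is, the weighted observation likelihood filter posterior is outlier robust. -/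

import Mathlib

open Matrix

/-- The WoLF posterior covariance `Σ(y') = (Σ₀⁻¹ + W(y')² Hᵀ R⁻¹ H)⁻¹`. -/
noncomputable def wolfCov {d m : ℕ} (H : Matrix (Fin d) (Fin m) ℝ)
    (R : Matrix (Fin d) (Fin d) ℝ) (S0 : Matrix (Fin m) (Fin m) ℝ)
    (W : (Fin d → ℝ) → ℝ) (y' : Fin d → ℝ) : Matrix (Fin m) (Fin m) ℝ :=
  (S0⁻¹ + (W y' ^ 2) • (Hᵀ * R⁻¹ * H))⁻¹

/-- The WoLF posterior mean `μ(y') = μ₀ + W(y')² Σ(y') Hᵀ R⁻¹ (y' − ŷ)` with `ŷ = Hμ₀`. -/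
noncomputable def wolfMean {d m : ℕ} (H : Matrix (Fin d) (Fin m) ℝ)
    (R : Matrix (Fin d) (Fin d) ℝ) (S0 : Matrix (Fin m) (Fin m) ℝ)
    (μ₀ : Fin m → ℝ) (W : (Fin d → ℝ) → ℝ) (y' : Fin d → ℝ) : Fin m → ℝ :=
  μ₀ + (W y' ^ 2) • (wolfCov H R S0 W y').mulVec
    (Hᵀ.mulVec (R⁻¹.mulVec (y' - H.mulVec μ₀)))

/-- The posterior influence function of the WoLF posterior: the Kullback–Leibler divergence
`KL(N(μ(y^c), Σ(y^c)) ‖ N(μ(y), Σ(y)))` in closed form. -/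
noncomputable def wolfPIF {d m : ℕ} (H : Matrix (Fin d) (Fin m) ℝ)
    (R : Matrix (Fin d) (Fin d) ℝ) (S0 : Matrix (Fin m) (Fin m) ℝ)
    (μ₀ : Fin m → ℝ) (W : (Fin d → ℝ) → ℝ) (y yc : Fin d → ℝ) : ℝ :=
  (1 / 2) * (((wolfCov H R S0 W yc)⁻¹ * wolfCov H R S0 W y).trace - (m : ℝ)
    + (wolfMean H R S0 μ₀ W y - wolfMean H R S0 μ₀ W yc) ⬝ᵥ
        ((wolfCov H R S0 W yc)⁻¹).mulVec
          (wolfMean H R S0 μ₀ W y - wolfMean H R S0 μ₀ W yc)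
    + Real.log ((wolfCov H R S0 W yc).det / (wolfCov H R S0 W y).det))

/-!
The posterior precision `Σ(yc)⁻¹ = Σ₀⁻¹ + w HᵀR⁻¹H` and the posterior mean
`μ(yc) = μ₀ + Σ(yc) HᵀR⁻¹ v` depend on `yc` only through `w = W(yc)² ∈ [0, C₂]` and
`v = w (yc - Hμ₀)`, and `‖v‖ ≤ C₇ + C₂ ‖Hμ₀‖` by (i) and (ii). Since the precision stays
positive definite for `w ≥ 0`, the PIF is a continuous function of `(w, v)`, hence bounded on
this compact set of parameters.
-/

open NNReal Set

theorem Continuous.matrix_inv {X ι 𝕜 : Type*} [TopologicalSpace X] [Fintype ι] [DecidableEq ι]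
    [Field 𝕜] [TopologicalSpace 𝕜] [IsTopologicalDivisionRing 𝕜]
    {A : X → Matrix ι ι 𝕜} (hA : Continuous A) (hdet : ∀ x, (A x).det ≠ 0) :
    Continuous fun x => (A x)⁻¹ :=
  continuous_iff_continuousAt.mpr fun x =>
    (continuousAt_matrix_inv _ <| by
      simpa only [Ring.inverse_eq_inv'] using continuousAt_inv₀ (hdet x)).comp hA.continuousAt

theorem pi_norm_le_sqrt_dotProduct_self {ι : Type*} [Fintype ι] (x : ι → ℝ) :
    ‖x‖ ≤ √(x ⬝ᵥ x) := by
  refine (pi_norm_le_iff_of_nonneg (Real.sqrt_nonneg _)).mpr fun i => ?_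
  rw [Real.norm_eq_abs, ← Real.sqrt_sq_eq_abs, sq]
  exact Real.sqrt_le_sqrt <| Finset.single_le_sum (f := fun j => x j * x j)
    (fun j _ => mul_self_nonneg _) (Finset.mem_univ i)

theorem norm_smul_sub_le_of_bounds {ι : Type*} [Fintype ι] {w C₂ C₇ : ℝ} {x : ι → ℝ}
    (hw : 0 ≤ w) (hC₂ : w ≤ C₂) (hC₇ : w * √(x ⬝ᵥ x) ≤ C₇) (x₀ : ι → ℝ) :
    ‖w • (x - x₀)‖ ≤ C₇ + C₂ * ‖x₀‖ := by
  rw [norm_smul, Real.norm_of_nonneg hw]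
  calc w * ‖x - x₀‖ ≤ w * ‖x‖ + w * ‖x₀‖ := by
        rw [← mul_add]; exact mul_le_mul_of_nonneg_left (norm_sub_le _ _) hw
    _ ≤ C₇ + C₂ * ‖x₀‖ := add_le_add
        ((mul_le_mul_of_nonneg_left (pi_norm_le_sqrt_dotProduct_self x) hw).trans hC₇)
        (mul_le_mul_of_nonneg_right hC₂ (norm_nonneg _))

section

variable {d m : ℕ} (H : Matrix (Fin d) (Fin m) ℝ) (R : Matrix (Fin d) (Fin d) ℝ)
  (S0 : Matrix (Fin m) (Fin m) ℝ) (μ₀ : Fin m → ℝ) (W : (Fin d → ℝ) → ℝ)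

noncomputable def wolfPrec (w : ℝ) : Matrix (Fin m) (Fin m) ℝ :=
  S0⁻¹ + w • (Hᵀ * R⁻¹ * H)

noncomputable def wolfWeight (y' : Fin d → ℝ) : ℝ≥0 :=
  (W y' ^ 2).toNNReal

theorem coe_wolfWeight (y' : Fin d → ℝ) : (wolfWeight W y' : ℝ) = W y' ^ 2 :=
  Real.coe_toNNReal _ (sq_nonneg _)

theorem wolfCov_eq_inv_wolfPrec (y' : Fin d → ℝ) :
    wolfCov H R S0 W y' = (wolfPrec H R S0 (wolfWeight W y'))⁻¹ := by
  rw [coe_wolfWeight]; rfl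

variable {H R S0}

theorem wolfPrec_posDef (hR : R.PosDef) (hS0 : S0.PosDef) {w : ℝ} (hw : 0 ≤ w) :
    (wolfPrec H R S0 w).PosDef := by
  have hHRH : (Hᵀ * R⁻¹ * H).PosSemidef := by
    simpa only [conjTranspose_eq_transpose_of_trivial] using
      hR.inv.posSemidef.conjTranspose_mul_mul_same H
  exact hS0.inv.add_posSemidef (hHRH.smul hw)

@[fun_prop]
theorem continuous_wolfPrec : Continuous (wolfPrec H R S0) := by
  unfold wolfPrec; fun_prop

theorem continuous_inv_wolfPrec (hR : R.PosDef) (hS0 : S0.PosDef) :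
    Continuous fun w : ℝ≥0 => (wolfPrec H R S0 w)⁻¹ :=
  (continuous_wolfPrec.comp NNReal.continuous_coe).matrix_inv fun w =>
    (wolfPrec_posDef hR hS0 w.2).det_pos.ne'

variable (H R S0)

/-- `wolfPIF H R S0 μ₀ W y yc` as a function of `(w, v) = (W(yc)², W(yc)² • (yc - Hμ₀))`. -/
noncomputable def wolfPIFParam (y : Fin d → ℝ) (p : ℝ≥0 × (Fin d → ℝ)) : ℝ :=
  (1 / 2) * ((wolfPrec H R S0 p.1 * wolfCov H R S0 W y).trace - (m : ℝ)
    + (wolfMean H R S0 μ₀ W y - (μ₀ + (wolfPrec H R S0 p.1)⁻¹ *ᵥ (Hᵀ *ᵥ (R⁻¹ *ᵥ p.2)))) ⬝ᵥ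
        wolfPrec H R S0 p.1 *ᵥ
          (wolfMean H R S0 μ₀ W y - (μ₀ + (wolfPrec H R S0 p.1)⁻¹ *ᵥ (Hᵀ *ᵥ (R⁻¹ *ᵥ p.2))))
    + Real.log ((wolfPrec H R S0 p.1)⁻¹.det / (wolfCov H R S0 W y).det))

variable {H R S0 μ₀ W}

theorem wolfPIF_eq_wolfPIFParam (hR : R.PosDef) (hS0 : S0.PosDef) (y yc : Fin d → ℝ) :
    wolfPIF H R S0 μ₀ W y yc =
      wolfPIFParam H R S0 μ₀ W y (wolfWeight W yc, (W yc ^ 2) • (yc - H *ᵥ μ₀)) := by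
  have hinv : (wolfPrec H R S0 (wolfWeight W yc))⁻¹⁻¹ = wolfPrec H R S0 (wolfWeight W yc) :=
    nonsing_inv_nonsing_inv _ (wolfPrec_posDef hR hS0 (wolfWeight W yc).2).det_pos.ne'.isUnit
  have hmean : wolfMean H R S0 μ₀ W yc =
      μ₀ + (wolfPrec H R S0 (wolfWeight W yc))⁻¹ *ᵥ
        (Hᵀ *ᵥ (R⁻¹ *ᵥ ((W yc ^ 2) • (yc - H *ᵥ μ₀)))) := by
    simp only [wolfMean, wolfCov_eq_inv_wolfPrec H R S0 W yc, mulVec_smul]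
  simp only [wolfPIF, wolfPIFParam, wolfCov_eq_inv_wolfPrec H R S0 W yc, hinv, hmean]

theorem continuous_wolfPIFParam (hR : R.PosDef) (hS0 : S0.PosDef) (y : Fin d → ℝ) :
    Continuous (wolfPIFParam H R S0 μ₀ W y) := by
  have hcov : Continuous fun p : ℝ≥0 × (Fin d → ℝ) => (wolfPrec H R S0 p.1)⁻¹ :=
    (continuous_inv_wolfPrec hR hS0).comp continuous_fst
  have hmean : Continuous fun p : ℝ≥0 × (Fin d → ℝ) =>
      (wolfPrec H R S0 p.1)⁻¹ *ᵥ (Hᵀ *ᵥ (R⁻¹ *ᵥ p.2)) := by fun_prop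
  have hlog : Continuous fun p : ℝ≥0 × (Fin d → ℝ) =>
      Real.log ((wolfPrec H R S0 p.1)⁻¹.det / (wolfCov H R S0 W y).det) :=
    (hcov.matrix_det.div_const _).log fun p =>
      div_ne_zero (wolfPrec_posDef hR hS0 p.1.2).inv.det_pos.ne'
        (wolfPrec_posDef hR hS0 (sq_nonneg (W y))).inv.det_pos.ne'
  unfold wolfPIFParam
  fun_prop

end

theorem wolf_pif_bounded_general {d m : ℕ}
    (H : Matrix (Fin d) (Fin m) ℝ)
    (R : Matrix (Fin d) (Fin d) ℝ) (hR : R.PosDef)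
    (S0 : Matrix (Fin m) (Fin m) ℝ) (hS0 : S0.PosDef)
    (μ₀ : Fin m → ℝ) (y : Fin d → ℝ)
    (W : (Fin d → ℝ) → ℝ) (C₂ C₇ : ℝ)
    (hW1 : ∀ y' : Fin d → ℝ, W y' ^ 2 ≤ C₂)
    (hW2 : ∀ y' : Fin d → ℝ, W y' ^ 2 * Real.sqrt (y' ⬝ᵥ y') ≤ C₇) :
    (∀ y' : Fin d → ℝ, (S0⁻¹ + (W y' ^ 2) • (Hᵀ * R⁻¹ * H)).PosDef) ∧
    ∃ C : ℝ, ∀ yc : Fin d → ℝ, wolfPIF H R S0 μ₀ W y yc ≤ C := by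
  refine ⟨fun y' => wolfPrec_posDef hR hS0 (sq_nonneg (W y')), ?_⟩
  obtain ⟨C, hC⟩ := ((isCompact_Icc (a := 0) (b := C₂.toNNReal)).prod
    (isCompact_closedBall (0 : Fin d → ℝ) (C₇ + C₂ * ‖H *ᵥ μ₀‖))).bddAbove_image
      (continuous_wolfPIFParam (μ₀ := μ₀) hR hS0 y).continuousOn
  refine ⟨C, fun yc => (wolfPIF_eq_wolfPIFParam hR hS0 y yc).trans_le (hC ⟨_, ?_, rfl⟩)⟩
  exact ⟨⟨zero_le, Real.toNNReal_le_toNNReal (hW1 yc)⟩, mem_closedBall_zero_iff.mpr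
    (norm_smul_sub_le_of_bounds (sq_nonneg _) (hW1 yc) (hW2 yc) _)⟩

/-- Lemmas D.2/D.4 (robustness half of Theorem 4.1): under the boundedness conditions on the
weighting function `W`, the posterior precision is positive definite and the posterior
influence function of the WoLF posterior is uniformly bounded: the filter is outlier robust. -/
theorem wolf_pif_bounded {d m : ℕ} (hd : 0 < d) (hm : 0 < m)
    (H : Matrix (Fin d) (Fin m) ℝ)
    (R : Matrix (Fin d) (Fin d) ℝ) (hR : R.PosDef)
    (S0 : Matrix (Fin m) (Fin m) ℝ) (hS0 : S0.PosDef)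
    (μ₀ : Fin m → ℝ) (y : Fin d → ℝ)
    (W : (Fin d → ℝ) → ℝ) (C₂ C₇ : ℝ)
    (hW1 : ∀ y' : Fin d → ℝ, W y' ^ 2 ≤ C₂)
    (hW2 : ∀ y' : Fin d → ℝ, W y' ^ 2 * Real.sqrt (y' ⬝ᵥ y') ≤ C₇) :
    (∀ y' : Fin d → ℝ, (S0⁻¹ + (W y' ^ 2) • (Hᵀ * R⁻¹ * H)).PosDef) ∧
    ∃ C : ℝ, ∀ yc : Fin d → ℝ, wolfPIF H R S0 μ₀ W y yc ≤ C :=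
  wolf_pif_bounded_general H R hR S0 hS0 μ₀ y W C₂ C₇ hW1 hW2
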